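/- arXiv:2004.09875 — 5 statements merged into one kernel-verified Lean document; each statement's English description precedes it below -/
import Mathlib

section
/- Let A be an n×n real Hurwitz matrix, Q symmetric positive definite, and X ≻ 0 the solution of the Lyapunov equation Aᵀ X + X A + Q = 0. Then the smallest eigenvalue of X satisfies λ₁(X) ≥ λ₁(Q) / (2‖A‖), where ‖A‖ is the spectral norm. -/
/-!
Let `v` be a unit eigenvector of `X` for its smallest eigenvalue `λ₁(X)`. Testing the Lyapunov
equation against `v` and using the symmetry of `X` gives `vᵀ Q v = -2 λ₁(X) vᵀ A v`. The left side
is at least `λ₁(Q)` by the Rayleigh bound and the right side at most `2 λ₁(X) ‖A‖` by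
Cauchy–Schwarz, so `λ₁(Q) ≤ 2 ‖A‖ λ₁(X)`.
-/

open Matrix

def IsHurwitz {n : ℕ} (A : Matrix (Fin n) (Fin n) ℝ) : Prop :=
  ∀ μ ∈ spectrum ℂ (A.map (Complex.ofReal : ℝ → ℂ)), μ.re < 0

/-- Spectral (ℓ²-operator) norm of a real matrix. -/
noncomputable def specNorm {m n : ℕ} (A : Matrix (Fin m) (Fin n) ℝ) : ℝ :=
  ‖LinearMap.toContinuousLinearMap (Matrix.toEuclideanLin A)‖

open scoped MatrixOrder

namespace Matrix

variable {n : Type*} [Fintype n]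

theorem IsHermitian.iInf_eigenvalues_mul_dotProduct_self_le [DecidableEq n] {Q : Matrix n n ℝ}
    (hQ : Q.IsHermitian) (v : n → ℝ) :
    (⨅ i, hQ.eigenvalues i) * (v ⬝ᵥ v) ≤ v ⬝ᵥ (Q *ᵥ v) := by
  have hle : algebraMap ℝ (Matrix n n ℝ) (⨅ i, hQ.eigenvalues i) ≤ Q := by
    refine algebraMap_le_of_le_spectrum (fun x hx => ?_) hQ.isSelfAdjoint
    rw [hQ.spectrum_real_eq_range_eigenvalues] at hx
    obtain ⟨i, rfl⟩ := hx
    exact ciInf_le (Finite.bddBelow_range _) i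
  have := (Matrix.le_iff.mp hle).dotProduct_mulVec_nonneg v
  simpa [Algebra.algebraMap_eq_smul_one, sub_mulVec, smul_mulVec, dotProduct_sub,
    dotProduct_smul] using this

theorem IsHermitian.exists_mulVec_eq_iInf_eigenvalues_smul [DecidableEq n] [Nonempty n]
    {X : Matrix n n ℝ} (hX : X.IsHermitian) :
    ∃ v : n → ℝ, v ⬝ᵥ v = 1 ∧ X *ᵥ v = (⨅ i, hX.eigenvalues i) • v := by
  obtain ⟨i₀, hi₀⟩ := Finite.exists_min hX.eigenvalues
  have hmin : ⨅ i, hX.eigenvalues i = hX.eigenvalues i₀ :=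
    le_antisymm (ciInf_le (Finite.bddBelow_range _) i₀) (le_ciInf hi₀)
  refine ⟨hX.eigenvectorBasis i₀, ?_, hmin ▸ hX.mulVec_eigenvectorBasis i₀⟩
  have hunit := hX.eigenvectorBasis.orthonormal.1 i₀
  rw [← one_pow 2, ← hunit, ← real_inner_self_eq_norm_sq, EuclideanSpace.inner_eq_star_dotProduct,
    star_trivial]

theorem IsSymm.dotProduct_lyapunov_mulVec_of_mulVec_eq_smul {R : Type*} [CommRing R]
    {A X : Matrix n n R} (hX : X.IsSymm) {μ : R} {v : n → R}
    (hv : X *ᵥ v = μ • v) :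
    v ⬝ᵥ ((Aᵀ * X + X * A) *ᵥ v) = 2 * μ * (v ⬝ᵥ (A *ᵥ v)) := by
  have hXt : vecMul v X = μ • v := by rw [← mulVec_transpose, hX.eq, hv]
  rw [add_mulVec, dotProduct_add, ← mulVec_mulVec, ← mulVec_mulVec, dotProduct_mulVec,
    vecMul_transpose, hv, dotProduct_mulVec v X, hXt]
  simp only [dotProduct_smul, smul_dotProduct, smul_eq_mul]
  rw [dotProduct_comm]; ring

end Matrix

theorem abs_dotProduct_mulVec_le_specNorm_mul {n : ℕ} (A : Matrix (Fin n) (Fin n) ℝ)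
    (v : Fin n → ℝ) : |v ⬝ᵥ (A *ᵥ v)| ≤ specNorm A * (v ⬝ᵥ v) := by
  set x : EuclideanSpace ℝ (Fin n) := WithLp.toLp 2 v
  set T := LinearMap.toContinuousLinearMap (Matrix.toEuclideanLin A)
  have hinner : inner ℝ x (T x) = v ⬝ᵥ (A *ᵥ v) := by
    simp [T, x, EuclideanSpace.inner_eq_star_dotProduct, dotProduct_comm]
  have hnorm : ‖x‖ ^ 2 = v ⬝ᵥ v := by
    rw [← real_inner_self_eq_norm_sq, EuclideanSpace.inner_eq_star_dotProduct, star_trivial]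
  calc |v ⬝ᵥ (A *ᵥ v)| = |inner ℝ x (T x)| := by rw [hinner]
    _ ≤ ‖x‖ * ‖T x‖ := abs_real_inner_le_norm x (T x)
    _ ≤ ‖x‖ * (‖T‖ * ‖x‖) := by gcongr; exact T.le_opNorm x
    _ = specNorm A * (v ⬝ᵥ v) := by rw [← hnorm, specNorm]; ring

theorem stmt_5_general {n : ℕ} (A Q X : Matrix (Fin n) (Fin n) ℝ)
    (hQ : Q.PosDef) (hX : X.PosDef)
    (hLyap : Aᵀ * X + X * A + Q = 0) :
    (⨅ i, hQ.1.eigenvalues i) / (2 * specNorm A) ≤ ⨅ i, hX.1.eigenvalues i := by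
  set lam := ⨅ i, hX.1.eigenvalues i
  have hlam_nonneg : 0 ≤ lam := Real.iInf_nonneg fun i => (hX.eigenvalues_pos i).le
  refine div_le_of_le_mul₀ (by unfold specNorm; positivity) hlam_nonneg ?_
  rcases isEmpty_or_nonempty (Fin n) with hn | hn
  · simp [lam, Real.iInf_of_isEmpty]
  obtain ⟨v, hvv, hXv⟩ := hX.1.exists_mulVec_eq_iInf_eigenvalues_smul
  have hQv : v ⬝ᵥ (Q *ᵥ v) = -(2 * lam * (v ⬝ᵥ (A *ᵥ v))) := by
    rw [eq_neg_of_add_eq_zero_right hLyap, neg_mulVec, dotProduct_neg,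
      (isHermitian_iff_isSymm.mp hX.1).dotProduct_lyapunov_mulVec_of_mulVec_eq_smul hXv]
  calc ⨅ i, hQ.1.eigenvalues i
      = (⨅ i, hQ.1.eigenvalues i) * (v ⬝ᵥ v) := by rw [hvv, mul_one]
    _ ≤ v ⬝ᵥ (Q *ᵥ v) := hQ.1.iInf_eigenvalues_mul_dotProduct_self_le v
    _ = 2 * lam * -(v ⬝ᵥ (A *ᵥ v)) := by rw [hQv]; ring
    _ ≤ 2 * lam * specNorm A := by
      gcongr
      simpa [hvv] using (neg_le_abs _).trans (abs_dotProduct_mulVec_le_specNorm_mul A v)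
    _ = lam * (2 * specNorm A) := by ring

theorem stmt_5 {n : ℕ} (A Q X : Matrix (Fin n) (Fin n) ℝ)
    (hA : IsHurwitz A) (hQ : Q.PosDef) (hX : X.PosDef)
    (hLyap : Aᵀ * X + X * A + Q = 0) :
    (⨅ i, hQ.1.eigenvalues i) / (2 * specNorm A) ≤ ⨅ i, hX.1.eigenvalues i :=
  stmt_5_general A Q X hQ hX hLyap
end

section
/- Let A be an n×n real Hurwitz matrix with stability degree σ(A) = −maxᵢ Re λᵢ(A) > 0, Q symmetric positive definite, and X the positive definite solution of Aᵀ X + X A + Q = 0. Then the largest eigenvalue of X satisfies λₙ(X) ≥ λ₁(Q)/(2σ(A)). -/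
open Matrix

/-- Stability degree: minus the largest real part of the (complex) spectrum. -/
noncomputable def stabDegree {n : ℕ} (A : Matrix (Fin n) (Fin n) ℝ) : ℝ :=
  -sSup (Complex.re '' spectrum ℂ (A.map (Complex.ofReal : ℝ → ℂ)))

/-!
Let `v` be a complex eigenvector of `A` whose eigenvalue `μ` has `Re μ = -σ(A)`. Sandwiching the
Lyapunov equation between `v*` and `v` gives `v* Q v = 2 σ(A) v* X v`, and the Rayleigh bounds
`λ₁(Q) |v|² ≤ v* Q v` and `v* X v ≤ λₙ(X) |v|²` give `λ₁(Q) ≤ 2 σ(A) λₙ(X)`.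
-/

open scoped MatrixOrder ComplexOrder

namespace Matrix

variable {ι : Type*} [Fintype ι]

lemma exists_mulVec_eq_smul_re_eq_sSup [DecidableEq ι] [Nonempty ι] (B : Matrix ι ι ℂ) :
    ∃ μ : ℂ, ∃ v : ι → ℂ, v ≠ 0 ∧ B *ᵥ v = μ • v ∧
      μ.re = sSup (Complex.re '' spectrum ℂ B) := by
  have hne : (Complex.re '' spectrum ℂ B).Nonempty :=
    (spectrum.nonempty_of_isAlgClosed_of_finiteDimensional ℂ B).image _
  obtain ⟨μ, hμ, hμre⟩ := hne.csSup_mem (B.finite_spectrum.image _)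
  rw [← spectrum_toLin', ← Module.End.hasEigenvalue_iff_mem_spectrum] at hμ
  obtain ⟨v, hv⟩ := hμ.exists_hasEigenvector
  exact ⟨μ, v, hv.2, by simpa using hv.apply_eq_smul, hμre⟩

lemma star_dotProduct_lyapunov_mulVec {𝕜 : Type*} [RCLike 𝕜] {B : Matrix ι ι 𝕜}
    (Y : Matrix ι ι 𝕜) {μ : 𝕜} {v : ι → 𝕜} (hv : B *ᵥ v = μ • v) :
    star v ⬝ᵥ (Bᴴ * Y + Y * B) *ᵥ v = (2 * RCLike.re μ) • (star v ⬝ᵥ Y *ᵥ v) := by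
  rw [add_mulVec, ← mulVec_mulVec, ← mulVec_mulVec, dotProduct_add, dotProduct_mulVec,
    vecMul_conjTranspose, star_star, hv, mulVec_smul, star_smul, smul_dotProduct, dotProduct_smul,
    RCLike.real_smul_eq_coe_mul, RCLike.ofReal_mul, RCLike.ofReal_ofNat, ← RCLike.add_conj]
  simp only [smul_eq_mul, RCLike.star_def]
  ring

lemma map_ofReal_lyapunov (A X : Matrix ι ι ℝ) :
    (A.map Complex.ofReal)ᴴ * X.map Complex.ofReal + X.map Complex.ofReal * A.map Complex.ofReal =
      (Aᵀ * X + X * A).map Complex.ofReal := by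
  ext i j
  simp [mul_apply]

lemma re_star_dotProduct_map_ofReal_mulVec (M : Matrix ι ι ℝ) (v : ι → ℂ) :
    (star v ⬝ᵥ M.map Complex.ofReal *ᵥ v).re =
      (fun i ↦ (v i).re) ⬝ᵥ M *ᵥ (fun i ↦ (v i).re) +
        (fun i ↦ (v i).im) ⬝ᵥ M *ᵥ (fun i ↦ (v i).im) := by
  simp only [dotProduct, mulVec, map_apply, Pi.star_apply, Complex.re_sum, Finset.mul_sum,
    ← Finset.sum_add_distrib]
  refine Finset.sum_congr rfl fun i _ ↦ Finset.sum_congr rfl fun j _ ↦ ?_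
  simp [Complex.mul_re, Complex.mul_im]

lemma re_star_dotProduct_self (v : ι → ℂ) :
    (star v ⬝ᵥ v).re = (fun i ↦ (v i).re) ⬝ᵥ (fun i ↦ (v i).re) +
      (fun i ↦ (v i).im) ⬝ᵥ (fun i ↦ (v i).im) := by
  classical
  simpa [Matrix.map_one _ Complex.ofReal_zero Complex.ofReal_one] using
    re_star_dotProduct_map_ofReal_mulVec 1 v

section Rayleigh

variable [DecidableEq ι]

lemma IsHermitian.iInf_eigenvalues_mul_re_le {𝕜 : Type*} [RCLike 𝕜] {M : Matrix ι ι 𝕜}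
    (hM : M.IsHermitian) (v : ι → 𝕜) :
    (⨅ i, hM.eigenvalues i) * RCLike.re (star v ⬝ᵥ v) ≤ RCLike.re (star v ⬝ᵥ M *ᵥ v) := by
  have hle : algebraMap ℝ _ (⨅ i, hM.eigenvalues i) ≤ M := by
    rw [algebraMap_le_iff_le_spectrum hM.isSelfAdjoint, hM.spectrum_real_eq_range_eigenvalues]
    rintro _ ⟨i, rfl⟩
    exact ciInf_le (Set.finite_range _).bddBelow i
  simpa [sub_mulVec, dotProduct_sub, Algebra.algebraMap_eq_smul_one, smul_mulVec,
    RCLike.smul_re] using (le_iff.mp hle).re_dotProduct_nonneg v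

lemma IsHermitian.re_le_iSup_eigenvalues_mul {𝕜 : Type*} [RCLike 𝕜] {M : Matrix ι ι 𝕜}
    (hM : M.IsHermitian) (v : ι → 𝕜) :
    RCLike.re (star v ⬝ᵥ M *ᵥ v) ≤ (⨆ i, hM.eigenvalues i) * RCLike.re (star v ⬝ᵥ v) := by
  have hle : M ≤ algebraMap ℝ _ (⨆ i, hM.eigenvalues i) := by
    rw [le_algebraMap_iff_spectrum_le hM.isSelfAdjoint, hM.spectrum_real_eq_range_eigenvalues]
    rintro _ ⟨i, rfl⟩
    exact le_ciSup (Set.finite_range _).bddAbove i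
  simpa [sub_mulVec, dotProduct_sub, Algebra.algebraMap_eq_smul_one, smul_mulVec,
    RCLike.smul_re] using (le_iff.mp hle).re_dotProduct_nonneg v

variable {M : Matrix ι ι ℝ}

lemma IsHermitian.iInf_eigenvalues_mul_re_le_map_ofReal (hM : M.IsHermitian) (v : ι → ℂ) :
    (⨅ i, hM.eigenvalues i) * (star v ⬝ᵥ v).re ≤ (star v ⬝ᵥ M.map Complex.ofReal *ᵥ v).re := by
  rw [re_star_dotProduct_self, re_star_dotProduct_map_ofReal_mulVec, mul_add]
  exact add_le_add (by simpa using hM.iInf_eigenvalues_mul_re_le _)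
    (by simpa using hM.iInf_eigenvalues_mul_re_le _)

lemma IsHermitian.re_map_ofReal_le_iSup_eigenvalues_mul (hM : M.IsHermitian) (v : ι → ℂ) :
    (star v ⬝ᵥ M.map Complex.ofReal *ᵥ v).re ≤ (⨆ i, hM.eigenvalues i) * (star v ⬝ᵥ v).re := by
  rw [re_star_dotProduct_self, re_star_dotProduct_map_ofReal_mulVec, mul_add]
  exact add_le_add (by simpa using hM.re_le_iSup_eigenvalues_mul _)
    (by simpa using hM.re_le_iSup_eigenvalues_mul _)

end Rayleigh

end Matrix

theorem stmt_6_general {n : ℕ} (A Q X : Matrix (Fin n) (Fin n) ℝ)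
    (hσ : 0 < stabDegree A) (hQ : Q.PosDef) (hX : X.PosDef)
    (hLyap : Aᵀ * X + X * A + Q = 0) :
    (⨅ i, hQ.1.eigenvalues i) / (2 * stabDegree A) ≤ ⨆ i, hX.1.eigenvalues i := by
  rcases isEmpty_or_nonempty (Fin n) with hn | hn
  · simp [Real.iInf_of_isEmpty, Real.iSup_of_isEmpty]
  obtain ⟨μ, v, hv0, hv, hμ⟩ := exists_mulVec_eq_smul_re_eq_sSup (A.map Complex.ofReal)
  have hμσ : μ.re = -stabDegree A := by rw [hμ, stabDegree, neg_neg]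
  have hLyapC : (A.map Complex.ofReal)ᴴ * X.map Complex.ofReal +
      X.map Complex.ofReal * A.map Complex.ofReal = -Q.map Complex.ofReal := by
    rw [map_ofReal_lyapunov, eq_neg_of_add_eq_zero_left hLyap, Matrix.map_neg _ Complex.ofReal_neg]
  have hQX : (star v ⬝ᵥ Q.map Complex.ofReal *ᵥ v).re =
      2 * stabDegree A * (star v ⬝ᵥ X.map Complex.ofReal *ᵥ v).re := by
    have := congrArg Complex.re (star_dotProduct_lyapunov_mulVec (X.map Complex.ofReal) hv)
    rw [hLyapC, neg_mulVec, dotProduct_neg, Complex.neg_re, RCLike.re_to_complex, hμσ,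
      Complex.smul_re, smul_eq_mul] at this
    linarith
  have hvv : 0 < (star v ⬝ᵥ v).re := (Complex.lt_def.mp (dotProduct_star_self_pos_iff.mpr hv0)).1
  have hbound : (⨅ i, hQ.1.eigenvalues i) * (star v ⬝ᵥ v).re ≤
      2 * stabDegree A * (⨆ i, hX.1.eigenvalues i) * (star v ⬝ᵥ v).re :=
    calc _ ≤ (star v ⬝ᵥ Q.map Complex.ofReal *ᵥ v).re :=
          hQ.1.iInf_eigenvalues_mul_re_le_map_ofReal v
      _ = 2 * stabDegree A * (star v ⬝ᵥ X.map Complex.ofReal *ᵥ v).re := hQX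
      _ ≤ 2 * stabDegree A * ((⨆ i, hX.1.eigenvalues i) * (star v ⬝ᵥ v).re) := by
        gcongr
        exact hX.1.re_map_ofReal_le_iSup_eigenvalues_mul v
      _ = _ := by ring
  rw [div_le_iff₀ (by positivity), mul_comm]
  exact le_of_mul_le_mul_right hbound hvv

theorem stmt_6 {n : ℕ} (A Q X : Matrix (Fin n) (Fin n) ℝ)
    (hA : IsHurwitz A) (hσ : 0 < stabDegree A) (hQ : Q.PosDef) (hX : X.PosDef)
    (hLyap : Aᵀ * X + X * A + Q = 0) :
    (⨅ i, hQ.1.eigenvalues i) / (2 * stabDegree A) ≤ ⨆ i, hX.1.eigenvalues i :=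
  stmt_6_general A Q X hσ hQ hX hLyap
end

section
/- Let K ∈ S be a stabilizing gain for the system (A, B, C), with Σ ≻ 0, Q ≻ 0, R ≻ 0, and let X ≻ 0 solve the closed-loop Lyapunov equation (A−BKC)ᵀX + X(A−BKC) + CᵀKᵀRKC + Q = 0. Then the LQR cost f(K) = Tr(XΣ) satisfies f(K) ≥ λ₁(Σ)λ₁(Q)/(−2 Re λₙ(A−BKC)), where λₙ(A−BKC) is the eigenvalue of largest real part. -/
/-!
Let `μ` be an eigenvalue of `A_K = A - BKC` of largest real part, with eigenvector
`v = x + iy`. Testing the Lyapunov equation against `x` and `y`, and dropping `CᵀKᵀRKC ⪰ 0`,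
gives `λ₁(Q) |v|² ≤ vᴴQv ≤ -2 Re μ · vᴴXv ≤ -2 Re μ · Tr X · |v|²`, so
`λ₁(Q) ≤ -2 Re μ · Tr X`. Combined with `Tr (XΣ) ≥ λ₁(Σ) Tr X` this is the bound.
-/

open Matrix

open scoped MatrixOrder

namespace Matrix

variable {ι : Type*} [Fintype ι]

lemma IsHermitian.algebraMap_iInf_eigenvalues_le [DecidableEq ι] {𝕜 : Type*} [RCLike 𝕜]
    {P : Matrix ι ι 𝕜} (hP : P.IsHermitian) :
    algebraMap ℝ _ (⨅ i, hP.eigenvalues i) ≤ P := by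
  rw [algebraMap_le_iff_le_spectrum (a := P) hP, hP.spectrum_real_eq_range_eigenvalues]
  rintro _ ⟨i, rfl⟩
  exact ciInf_le (Set.finite_range _).bddBelow i

lemma PosSemidef.le_algebraMap_trace [DecidableEq ι] {P : Matrix ι ι ℝ} (hP : P.PosSemidef) :
    P ≤ algebraMap ℝ _ P.trace := by
  rw [le_algebraMap_iff_spectrum_le (a := P) hP.1, hP.1.spectrum_real_eq_range_eigenvalues,
    hP.1.trace_eq_sum_eigenvalues]
  rintro _ ⟨i, rfl⟩
  exact Finset.single_le_sum (fun j _ => hP.eigenvalues_nonneg j) (Finset.mem_univ i)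

lemma dotProduct_mulVec_le_of_le {P P' : Matrix ι ι ℝ} (h : P ≤ P') (x : ι → ℝ) :
    x ⬝ᵥ (P *ᵥ x) ≤ x ⬝ᵥ (P' *ᵥ x) := by
  have := (le_iff.mp h).dotProduct_mulVec_nonneg x
  simpa [sub_mulVec] using this

lemma dotProduct_algebraMap_mulVec [DecidableEq ι] (c : ℝ) (x : ι → ℝ) :
    x ⬝ᵥ (algebraMap ℝ (Matrix ι ι ℝ) c *ᵥ x) = c * (x ⬝ᵥ x) := by
  simp [Algebra.algebraMap_eq_smul_one, smul_mulVec]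

lemma PosSemidef.trace_mul_nonneg [DecidableEq ι] {X T : Matrix ι ι ℝ} (hX : X.PosSemidef)
    (hT : T.PosSemidef) : 0 ≤ (X * T).trace := by
  obtain ⟨s, rfl⟩ := CStarAlgebra.nonneg_iff_eq_star_mul_self.mp hX.nonneg
  rw [Matrix.mul_assoc, trace_mul_comm, star_eq_conjTranspose]
  exact (hT.mul_mul_conjTranspose_same s).trace_nonneg

lemma PosSemidef.mul_trace_le_trace_mul [DecidableEq ι] {X S : Matrix ι ι ℝ}
    (hX : X.PosSemidef) {c : ℝ} (hS : algebraMap ℝ _ c ≤ S) :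
    c * X.trace ≤ (X * S).trace := by
  have := hX.trace_mul_nonneg (le_iff.mp hS)
  rwa [Matrix.mul_sub, trace_sub, sub_nonneg, Algebra.algebraMap_eq_smul_one, Matrix.mul_smul,
    Matrix.mul_one, trace_smul, smul_eq_mul] at this

lemma exists_re_im_of_mem_spectrum_map_ofReal [DecidableEq ι] {A : Matrix ι ι ℝ} {μ : ℂ}
    (hμ : μ ∈ spectrum ℂ (A.map (Complex.ofReal : ℝ → ℂ))) :
    ∃ x y : ι → ℝ, 0 < x ⬝ᵥ x + y ⬝ᵥ y ∧
      A *ᵥ x = μ.re • x - μ.im • y ∧ A *ᵥ y = μ.im • x + μ.re • y := by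
  rw [← spectrum_toLin', ← Module.End.hasEigenvalue_iff_mem_spectrum] at hμ
  obtain ⟨v, hv⟩ := hμ.exists_hasEigenvector
  have hAv : ∀ i, ∑ j, (A i j : ℂ) * v j = μ * v i := fun i => by
    simpa [mulVec, dotProduct] using congrFun hv.apply_eq_smul i
  refine ⟨fun i => (v i).re, fun i => (v i).im, ?_, ?_, ?_⟩
  · obtain ⟨i, hi⟩ := Function.ne_iff.mp hv.2
    have hsum : ∑ j, ((v j).re * (v j).re + (v j).im * (v j).im)
        = ∑ j, Complex.normSq (v j) := by
      simp [Complex.normSq_apply]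
    rw [dotProduct, dotProduct, ← Finset.sum_add_distrib, hsum]
    exact Finset.sum_pos' (fun j _ => Complex.normSq_nonneg _)
      ⟨i, Finset.mem_univ i, Complex.normSq_pos.mpr hi⟩
  · funext i
    simpa [mulVec, dotProduct, Complex.re_sum] using congrArg Complex.re (hAv i)
  · funext i
    simpa [mulVec, dotProduct, Complex.im_sum, add_comm] using congrArg Complex.im (hAv i)

lemma lyapunov_dotProduct_mulVec_add_eq {A X : Matrix ι ι ℝ} (hX : X.IsSymm) {a b : ℝ}
    {x y : ι → ℝ} (hx : A *ᵥ x = a • x - b • y) (hy : A *ᵥ y = b • x + a • y) :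
    x ⬝ᵥ ((Aᵀ * X + X * A) *ᵥ x) + y ⬝ᵥ ((Aᵀ * X + X * A) *ᵥ y)
      = 2 * a * (x ⬝ᵥ (X *ᵥ x) + y ⬝ᵥ (X *ᵥ y)) := by
  have hsymm : ∀ u w : ι → ℝ, u ⬝ᵥ (X *ᵥ w) = w ⬝ᵥ (X *ᵥ u) := fun u w => by
    rw [dotProduct_mulVec, ← mulVec_transpose, hX.eq, dotProduct_comm]
  have hform : ∀ u : ι → ℝ,
      u ⬝ᵥ ((Aᵀ * X + X * A) *ᵥ u) = 2 * ((A *ᵥ u) ⬝ᵥ (X *ᵥ u)) := by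
    intro u
    rw [add_mulVec, dotProduct_add, ← mulVec_mulVec, ← mulVec_mulVec, dotProduct_mulVec u Aᵀ,
      vecMul_transpose, hsymm u]
    ring
  rw [hform, hform, hx, hy]
  simp only [sub_dotProduct, add_dotProduct, smul_dotProduct, smul_eq_mul]
  rw [hsymm y x]
  ring

lemma iInf_eigenvalues_le_of_lyapunov_le [DecidableEq ι] {A X Q : Matrix ι ι ℝ}
    (hX : X.PosSemidef) (hQ : Q.IsHermitian) (hLyap : Aᵀ * X + X * A + Q ≤ 0) {μ : ℂ}
    (hμ : μ ∈ spectrum ℂ (A.map (Complex.ofReal : ℝ → ℂ))) (hre : μ.re ≤ 0) :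
    ⨅ i, hQ.eigenvalues i ≤ -2 * μ.re * X.trace := by
  obtain ⟨x, y, hN, hx, hy⟩ := exists_re_im_of_mem_spectrum_map_ofReal hμ
  set L := Aᵀ * X + X * A
  have hLform := lyapunov_dotProduct_mulVec_add_eq (isHermitian_iff_isSymm.mp hX.1) hx hy
  have hLx := dotProduct_mulVec_le_of_le hLyap x
  have hLy := dotProduct_mulVec_le_of_le hLyap y
  have hQx := dotProduct_mulVec_le_of_le hQ.algebraMap_iInf_eigenvalues_le x
  have hQy := dotProduct_mulVec_le_of_le hQ.algebraMap_iInf_eigenvalues_le y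
  have hXx := dotProduct_mulVec_le_of_le hX.le_algebraMap_trace x
  have hXy := dotProduct_mulVec_le_of_le hX.le_algebraMap_trace y
  simp only [dotProduct_algebraMap_mulVec, add_mulVec, dotProduct_add, zero_mulVec,
    dotProduct_zero] at hLx hLy hQx hQy hXx hXy
  refine le_of_mul_le_mul_right ?_ hN
  calc (⨅ i, hQ.eigenvalues i) * (x ⬝ᵥ x + y ⬝ᵥ y)
      ≤ x ⬝ᵥ (Q *ᵥ x) + y ⬝ᵥ (Q *ᵥ y) := by linarith
    _ ≤ -2 * μ.re * (x ⬝ᵥ (X *ᵥ x) + y ⬝ᵥ (X *ᵥ y)) := by linarith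
    _ ≤ -2 * μ.re * (X.trace * (x ⬝ᵥ x + y ⬝ᵥ y)) := by gcongr <;> linarith
    _ = -2 * μ.re * X.trace * (x ⬝ᵥ x + y ⬝ᵥ y) := by ring

end Matrix

theorem stmt_11 {n m r : ℕ}
    (A : Matrix (Fin n) (Fin n) ℝ) (B : Matrix (Fin n) (Fin m) ℝ)
    (C : Matrix (Fin r) (Fin n) ℝ) (K : Matrix (Fin m) (Fin r) ℝ)
    (Sig Q X : Matrix (Fin n) (Fin n) ℝ) (R : Matrix (Fin m) (Fin m) ℝ)
    (hHur : IsHurwitz (A - B * K * C))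
    (hSig : Sig.PosDef) (hQ : Q.PosDef) (hR : R.PosDef) (hX : X.PosDef)
    (hLyap : (A - B * K * C)ᵀ * X + X * (A - B * K * C) + Cᵀ * Kᵀ * R * K * C + Q = 0) :
    (⨅ i, hSig.1.eigenvalues i) * (⨅ i, hQ.1.eigenvalues i) /
      (-2 * sSup (Complex.re '' spectrum ℂ ((A - B * K * C).map (Complex.ofReal : ℝ → ℂ))))
      ≤ (X * Sig).trace := by
  set Ak := A - B * K * C
  have hLyapLe : Akᵀ * X + X * Ak + Q ≤ 0 := by
    have hCost : (Cᵀ * Kᵀ * R * K * C).PosSemidef := by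
      simpa [conjTranspose_mul, Matrix.mul_assoc] using
        hR.posSemidef.conjTranspose_mul_mul_same (K * C)
    have hSum : Akᵀ * X + X * Ak + Q = -(Cᵀ * Kᵀ * R * K * C) :=
      eq_neg_of_add_eq_zero_left (by rw [← hLyap]; abel)
    rw [hSum]
    exact neg_nonpos.mpr hCost.nonneg
  have hTrace := hX.posSemidef.mul_trace_le_trace_mul hSig.1.algebraMap_iInf_eigenvalues_le
  rcases (spectrum ℂ (Ak.map (Complex.ofReal : ℝ → ℂ))).eq_empty_or_nonempty
    with hEmpty | hNonempty
  -- `n = 0`: then `sSup ∅ = 0` and the left-hand side is a division by zero.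
  · simpa [hEmpty] using hX.posSemidef.trace_mul_nonneg hSig.posSemidef
  obtain ⟨μ, hμ, hμs⟩ := (hNonempty.image Complex.re).csSup_mem ((finite_spectrum _).image _)
  rw [← hμs]
  have hre := hHur μ hμ
  have hQμ := iInf_eigenvalues_le_of_lyapunov_le hX.posSemidef hQ.1 hLyapLe hμ hre.le
  have hSig0 : 0 ≤ ⨅ i, hSig.1.eigenvalues i :=
    Real.iInf_nonneg fun i => (hSig.eigenvalues_pos i).le
  rw [div_le_iff₀ (by linarith)]
  calc (⨅ i, hSig.1.eigenvalues i) * (⨅ i, hQ.1.eigenvalues i)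
      ≤ (⨅ i, hSig.1.eigenvalues i) * (-2 * μ.re * X.trace) := by gcongr
    _ = (⨅ i, hSig.1.eigenvalues i) * X.trace * (-2 * μ.re) := by ring
    _ ≤ (X * Sig).trace * (-2 * μ.re) := by gcongr; linarith
end

section
/- Under the same setting, the LQR cost satisfies the lower bound f(K) ≥ λ₁(Σ) λ₁(R) ‖K‖_F² λ₁(CCᵀ) / (2‖A‖ + 2‖K‖_F ‖B‖ ‖C‖). Consequently f is coercive in ‖K‖_F when λ₁(CCᵀ) > 0. -/
open Matrix Filter

/-- Frobenius norm of a real matrix. -/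
noncomputable def frobNorm {m n : ℕ} (A : Matrix (Fin m) (Fin n) ℝ) : ℝ :=
  Real.sqrt (∑ i, ∑ j, (A i j) ^ 2)

/-!
Take the trace of the Lyapunov equation. Since `tr (Aₖᵀ X) = tr (X Aₖ)` for the closed loop
matrix `Aₖ = A - B K C`, it reads `tr (Cᵀ Kᵀ R K C) + tr Q = -2 tr (X Aₖ) ≤ 2 ‖Aₖ‖ tr X`, and
`‖Aₖ‖ ≤ ‖A‖ + ‖K‖_F ‖B‖ ‖C‖`. The left-hand side is at least `λ₁(R) λ₁(C Cᵀ) ‖K‖_F²`, while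
`f(K) = tr (X Σ) ≥ λ₁(Σ) tr X`. This gives the lower bound; since it grows linearly in `‖K‖_F`,
the cost is coercive as soon as `λ₁(C Cᵀ) > 0`.
-/

namespace Matrix

variable {ι : Type*} [Fintype ι] [DecidableEq ι]

theorem PosSemidef.trace_mul_nonneg_s12 {M N : Matrix ι ι ℝ} (hM : M.PosSemidef)
    (hN : N.PosSemidef) : 0 ≤ (M * N).trace := by
  open scoped MatrixOrder in
  obtain ⟨B, rfl⟩ : ∃ B : Matrix ι ι ℝ, N = Bᴴ * B :=
    CStarAlgebra.nonneg_iff_eq_star_mul_self.mp hN.nonneg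
  rw [← mul_assoc, trace_mul_cycle]
  exact (hM.mul_mul_conjTranspose_same B).trace_nonneg

theorem PosSemidef.iInf_eigenvalues_nonneg {M : Matrix ι ι ℝ} (hM : M.PosSemidef) :
    0 ≤ ⨅ i, hM.1.eigenvalues i :=
  Real.iInf_nonneg hM.eigenvalues_nonneg

theorem PosDef.iInf_eigenvalues_pos [Nonempty ι] {M : Matrix ι ι ℝ} (hM : M.PosDef) :
    0 < ⨅ i, hM.1.eigenvalues i := by
  obtain ⟨i, hi⟩ := exists_eq_ciInf_of_finite (f := hM.1.eigenvalues)
  exact hi ▸ hM.eigenvalues_pos i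

open scoped MatrixOrder in
theorem IsHermitian.posSemidef_sub_iInf_eigenvalues_smul_one {M : Matrix ι ι ℝ}
    (hM : M.IsHermitian) : (M - (⨅ i, hM.eigenvalues i) • 1).PosSemidef := by
  rw [← le_iff, ← Algebra.algebraMap_eq_smul_one]
  refine algebraMap_le_of_le_spectrum (fun x hx => ?_) hM
  rw [hM.spectrum_real_eq_range_eigenvalues] at hx
  obtain ⟨i, rfl⟩ := hx
  exact ciInf_le (Finite.bddBelow_range _) i

theorem IsHermitian.iInf_eigenvalues_mul_trace_le {M P : Matrix ι ι ℝ} (hM : M.IsHermitian)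
    (hP : P.PosSemidef) : (⨅ i, hM.eigenvalues i) * P.trace ≤ (M * P).trace := by
  have h := hM.posSemidef_sub_iInf_eigenvalues_smul_one.trace_mul_nonneg_s12 hP
  rwa [sub_mul, smul_mul, one_mul, trace_sub, trace_smul, smul_eq_mul, sub_nonneg] at h

theorem nonempty_of_iInf_eigenvalues_mul_transpose_pos {κ : Type*} [Fintype κ]
    {C : Matrix ι κ ℝ} (hCC : (C * Cᵀ).IsHermitian) (h : 0 < ⨅ i, hCC.eigenvalues i) :
    Nonempty κ := by
  by_contra! hκ
  have hzero : C * Cᵀ = 0 := by ext; simp [mul_apply]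
  rw [hCC.eigenvalues_eq_zero_iff.mpr hzero] at h
  simp at h

end Matrix

theorem Filter.Tendsto.atTop_of_mul_sq_le {α : Type*} {l : Filter α} [l.NeBot] {u v : α → ℝ}
    {a b c : ℝ} (hu : Tendsto u l atTop) (hc : 0 < c) (ha : 0 ≤ a) (hb : 0 ≤ b)
    (hv : ∀ x, 0 ≤ v x) (h : ∀ x, c * u x ^ 2 ≤ (a + b * u x) * v x) : Tendsto v l atTop := by
  have hlin : ∀ᶠ x in l, c * u x ≤ (a + b) * v x :=
    (hu.eventually_ge_atTop 1).mono fun x hx => by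
      refine le_of_mul_le_mul_right ?_ (zero_lt_one.trans_le hx)
      nlinarith [h x, mul_nonneg (mul_nonneg ha (sub_nonneg.2 hx)) (hv x)]
  have hg : Tendsto (fun x => (a + b) * v x) l atTop :=
    tendsto_atTop_mono' l hlin (hu.const_mul_atTop hc)
  have hab : 0 < a + b := (add_nonneg ha hb).lt_of_ne fun hab =>
    not_tendsto_const_atTop (0 : ℝ) l (by simpa [← hab] using hg)
  exact hg.atTop_of_const_mul₀ hab

section L2OpNorm

open scoped Matrix.Norms.L2Operator

variable {k m n : ℕ}

theorem specNorm_nonneg (M : Matrix (Fin m) (Fin n) ℝ) : 0 ≤ specNorm M :=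
  norm_nonneg M

theorem specNorm_neg (M : Matrix (Fin m) (Fin n) ℝ) : specNorm (-M) = specNorm M :=
  norm_neg M

theorem frobNorm_nonneg (M : Matrix (Fin m) (Fin n) ℝ) : 0 ≤ frobNorm M :=
  Real.sqrt_nonneg _

theorem frobNorm_sq_eq_trace (M : Matrix (Fin m) (Fin n) ℝ) :
    frobNorm M ^ 2 = (Mᵀ * M).trace := by
  rw [frobNorm, Real.sq_sqrt (by positivity), trace, Finset.sum_comm]
  simp [mul_apply, sq]

theorem specNorm_le_frobNorm (M : Matrix (Fin m) (Fin n) ℝ) : specNorm M ≤ frobNorm M := by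
  refine ContinuousLinearMap.opNorm_le_bound _ (frobNorm_nonneg M) fun x => ?_
  refine le_of_sq_le_sq ?_ (mul_nonneg (frobNorm_nonneg M) (norm_nonneg x))
  rw [mul_pow, frobNorm, Real.sq_sqrt (by positivity), EuclideanSpace.norm_sq_eq,
    EuclideanSpace.norm_sq_eq, Finset.sum_mul]
  refine Finset.sum_le_sum fun i _ => ?_
  simpa [mulVec, dotProduct] using Finset.sum_mul_sq_le_sq_mul_sq Finset.univ (M i) x

theorem dotProduct_mulVec_le_specNorm_mul (M : Matrix (Fin k) (Fin k) ℝ) (v : Fin k → ℝ) :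
    v ⬝ᵥ M *ᵥ v ≤ specNorm M * (v ⬝ᵥ v) := by
  have hv : ‖WithLp.toLp 2 v‖ ^ 2 = v ⬝ᵥ v := by
    rw [← real_inner_self_eq_norm_sq, EuclideanSpace.inner_eq_star_dotProduct]
    simp
  calc v ⬝ᵥ M *ᵥ v
      = inner ℝ (WithLp.toLp 2 v) (toEuclideanCLM (𝕜 := ℝ) M (WithLp.toLp 2 v)) :=
        (inner_toEuclideanCLM M _ _).symm
    _ ≤ ‖WithLp.toLp 2 v‖ * ‖toEuclideanCLM (𝕜 := ℝ) M (WithLp.toLp 2 v)‖ :=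
        real_inner_le_norm _ _
    _ ≤ ‖WithLp.toLp 2 v‖ * (specNorm M * ‖WithLp.toLp 2 v‖) := by
        gcongr
        exact (toEuclideanCLM (𝕜 := ℝ) M).le_opNorm _
    _ = specNorm M * (v ⬝ᵥ v) := by rw [← hv]; ring

theorem Matrix.PosSemidef.trace_mul_le_specNorm_mul_trace {X : Matrix (Fin k) (Fin k) ℝ}
    (hX : X.PosSemidef) (M : Matrix (Fin k) (Fin k) ℝ) :
    (X * M).trace ≤ specNorm M * X.trace := by
  open scoped MatrixOrder in
  obtain ⟨B, rfl⟩ : ∃ B : Matrix (Fin k) (Fin k) ℝ, X = Bᴴ * B :=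
    CStarAlgebra.nonneg_iff_eq_star_mul_self.mp hX.nonneg
  have hrow : ∀ i, (B * M * Bᴴ) i i = B i ⬝ᵥ M *ᵥ B i := fun i => by
    simp only [conjTranspose_eq_transpose_of_trivial, mul_apply, transpose_apply, dotProduct,
      mulVec, Finset.mul_sum, Finset.sum_mul]
    rw [Finset.sum_comm]
    exact Finset.sum_congr rfl fun _ _ => Finset.sum_congr rfl fun _ _ => by ring
  have hsq : ∀ i, (B * Bᴴ) i i = B i ⬝ᵥ B i := fun i => by
    simp [mul_apply, dotProduct]
  rw [trace_mul_cycle, trace_mul_cycle, trace_mul_comm Bᴴ, trace, trace, Finset.mul_sum]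
  exact Finset.sum_le_sum fun i _ => by
    simpa only [diag, hrow, hsq] using dotProduct_mulVec_le_specNorm_mul M (B i)

theorem specNorm_sub_mul_mul_le {r : ℕ} (A : Matrix (Fin n) (Fin n) ℝ)
    (B : Matrix (Fin n) (Fin m) ℝ) (K : Matrix (Fin m) (Fin r) ℝ) (C : Matrix (Fin r) (Fin n) ℝ) :
    specNorm (A - B * K * C) ≤ specNorm A + frobNorm K * specNorm B * specNorm C := by
  change ‖A - B * K * C‖ ≤ ‖A‖ + frobNorm K * ‖B‖ * ‖C‖
  calc ‖A - B * K * C‖ ≤ ‖A‖ + ‖B‖ * ‖K‖ * ‖C‖ := by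
        grw [norm_sub_le, l2_opNorm_mul, l2_opNorm_mul]
    _ ≤ ‖A‖ + ‖B‖ * frobNorm K * ‖C‖ := by grw [← specNorm_le_frobNorm K]; rfl
    _ = ‖A‖ + frobNorm K * ‖B‖ * ‖C‖ := by ring

theorem trace_le_two_specNorm_mul_trace_of_lyapunov {M X P Q : Matrix (Fin k) (Fin k) ℝ}
    (hX : X.PosSemidef) (hQ : Q.PosSemidef) (h : Mᵀ * X + X * M + P + Q = 0) :
    P.trace ≤ 2 * specNorm M * X.trace := by
  have htr := congrArg trace h
  rw [trace_add, trace_add, trace_add, trace_zero] at htr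
  have hsymm : (Mᵀ * X).trace = (X * M).trace := by
    rw [← trace_transpose, transpose_mul, transpose_transpose,
      ← conjTranspose_eq_transpose_of_trivial, hX.1.eq]
  have hneg := hX.trace_mul_le_specNorm_mul_trace (-M)
  rw [mul_neg, trace_neg, specNorm_neg] at hneg
  linarith [hQ.trace_nonneg]

end L2OpNorm

theorem iInf_eigenvalues_mul_frobNorm_sq_le_trace {m n r : ℕ} {R : Matrix (Fin m) (Fin m) ℝ}
    {C : Matrix (Fin r) (Fin n) ℝ} (hR : R.PosSemidef) (hCC : (C * Cᵀ).IsHermitian)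
    (K : Matrix (Fin m) (Fin r) ℝ) :
    (⨅ i, hR.1.eigenvalues i) * (⨅ i, hCC.eigenvalues i) * frobNorm K ^ 2 ≤
      (Cᵀ * Kᵀ * R * K * C).trace := by
  have hKK : (Kᵀ * K).PosSemidef := by
    simpa using posSemidef_conjTranspose_mul_self K
  have hKC : (K * C * (K * C)ᵀ).PosSemidef := by
    simpa using posSemidef_self_mul_conjTranspose (K * C)
  calc (⨅ i, hR.1.eigenvalues i) * (⨅ i, hCC.eigenvalues i) * frobNorm K ^ 2
      = (⨅ i, hR.1.eigenvalues i) * ((⨅ i, hCC.eigenvalues i) * (Kᵀ * K).trace) := by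
        rw [frobNorm_sq_eq_trace]; ring
    _ ≤ (⨅ i, hR.1.eigenvalues i) * (C * Cᵀ * (Kᵀ * K)).trace := by
        gcongr
        · exact hR.iInf_eigenvalues_nonneg
        · exact hCC.iInf_eigenvalues_mul_trace_le hKK
    _ = (⨅ i, hR.1.eigenvalues i) * (K * C * (K * C)ᵀ).trace := by
        rw [show K * C * (K * C)ᵀ = K * (C * Cᵀ * Kᵀ) by simp [Matrix.mul_assoc],
          trace_mul_comm K]
        simp only [Matrix.mul_assoc]
    _ ≤ (R * (K * C * (K * C)ᵀ)).trace := hR.1.iInf_eigenvalues_mul_trace_le hKC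
    _ = (Cᵀ * Kᵀ * R * K * C).trace := by
        rw [show Cᵀ * Kᵀ * R * K * C = (K * C)ᵀ * (R * (K * C)) by simp [Matrix.mul_assoc],
          trace_mul_comm (K * C)ᵀ]
        simp only [Matrix.mul_assoc]

section LQR

variable {n m r : ℕ} (A : Matrix (Fin n) (Fin n) ℝ) (B : Matrix (Fin n) (Fin m) ℝ)
  (C : Matrix (Fin r) (Fin n) ℝ) {Sig Q : Matrix (Fin n) (Fin n) ℝ} {R : Matrix (Fin m) (Fin m) ℝ}

theorem two_specNorm_add_two_frobNorm_mul_specNorm_mul_nonneg (K : Matrix (Fin m) (Fin r) ℝ) :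
    0 ≤ 2 * specNorm A + 2 * frobNorm K * specNorm B * specNorm C := by
  have := specNorm_nonneg A; have := specNorm_nonneg B; have := specNorm_nonneg C
  have := frobNorm_nonneg K
  positivity

theorem mul_frobNorm_sq_le_mul_trace_of_lyapunov (hSig : Sig.PosSemidef) (hQ : Q.PosSemidef)
    (hR : R.PosSemidef) (hCC : (C * Cᵀ).IsHermitian) {K : Matrix (Fin m) (Fin r) ℝ}
    {X : Matrix (Fin n) (Fin n) ℝ} (hX : X.PosSemidef)
    (hLyap : (A - B * K * C)ᵀ * X + X * (A - B * K * C) + Cᵀ * Kᵀ * R * K * C + Q = 0) :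
    (⨅ i, hSig.1.eigenvalues i) * (⨅ i, hR.1.eigenvalues i) * frobNorm K ^ 2 *
        (⨅ i, hCC.eigenvalues i) ≤
      (2 * specNorm A + 2 * frobNorm K * specNorm B * specNorm C) * (X * Sig).trace := by
  have hSigX : (⨅ i, hSig.1.eigenvalues i) * X.trace ≤ (X * Sig).trace :=
    trace_mul_comm Sig X ▸ hSig.1.iInf_eigenvalues_mul_trace_le hX
  calc (⨅ i, hSig.1.eigenvalues i) * (⨅ i, hR.1.eigenvalues i) * frobNorm K ^ 2 *
        (⨅ i, hCC.eigenvalues i)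
      = (⨅ i, hSig.1.eigenvalues i) *
          ((⨅ i, hR.1.eigenvalues i) * (⨅ i, hCC.eigenvalues i) * frobNorm K ^ 2) := by ring
    _ ≤ (⨅ i, hSig.1.eigenvalues i) *
          (2 * (specNorm A + frobNorm K * specNorm B * specNorm C) * X.trace) := by
        refine mul_le_mul_of_nonneg_left ?_ hSig.iInf_eigenvalues_nonneg
        grw [iInf_eigenvalues_mul_frobNorm_sq_le_trace hR hCC K,
          trace_le_two_specNorm_mul_trace_of_lyapunov hX hQ hLyap,
          specNorm_sub_mul_mul_le A B K C]
        exact hX.trace_nonneg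
    _ = (2 * specNorm A + 2 * frobNorm K * specNorm B * specNorm C) *
          ((⨅ i, hSig.1.eigenvalues i) * X.trace) := by ring
    _ ≤ (2 * specNorm A + 2 * frobNorm K * specNorm B * specNorm C) * (X * Sig).trace :=
        mul_le_mul_of_nonneg_left hSigX
          (two_specNorm_add_two_frobNorm_mul_specNorm_mul_nonneg A B C K)

theorem div_le_trace_of_lyapunov (hSig : Sig.PosSemidef) (hQ : Q.PosSemidef)
    (hR : R.PosSemidef) (hCC : (C * Cᵀ).IsHermitian) {K : Matrix (Fin m) (Fin r) ℝ}
    {X : Matrix (Fin n) (Fin n) ℝ} (hX : X.PosSemidef)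
    (hLyap : (A - B * K * C)ᵀ * X + X * (A - B * K * C) + Cᵀ * Kᵀ * R * K * C + Q = 0) :
    (⨅ i, hSig.1.eigenvalues i) * (⨅ i, hR.1.eigenvalues i) * frobNorm K ^ 2 *
        (⨅ i, hCC.eigenvalues i) /
        (2 * specNorm A + 2 * frobNorm K * specNorm B * specNorm C) ≤ (X * Sig).trace :=
  div_le_of_le_mul₀ (two_specNorm_add_two_frobNorm_mul_specNorm_mul_nonneg A B C K)
    (hX.trace_mul_nonneg_s12 hSig)
    ((mul_frobNorm_sq_le_mul_trace_of_lyapunov A B C hSig hQ hR hCC hX hLyap).trans_eq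
      (mul_comm _ _))

theorem tendsto_trace_atTop_of_lyapunov (hSig : Sig.PosDef) (hQ : Q.PosSemidef)
    (hR : R.PosDef) (hCC : (C * Cᵀ).IsHermitian) (hpos : 0 < ⨅ i, hCC.eigenvalues i)
    {K : ℕ → Matrix (Fin m) (Fin r) ℝ} {X : ℕ → Matrix (Fin n) (Fin n) ℝ}
    (hX : ∀ j, (X j).PosSemidef)
    (hLyap : ∀ j, (A - B * K j * C)ᵀ * X j + X j * (A - B * K j * C)
        + Cᵀ * (K j)ᵀ * R * K j * C + Q = 0)
    (hK : Tendsto (fun j => frobNorm (K j)) atTop atTop) :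
    Tendsto (fun j => (X j * Sig).trace) atTop atTop := by
  have : Nonempty (Fin m) := by
    by_contra! hm
    simp only [frobNorm, Finset.univ_eq_empty, Finset.sum_empty, Real.sqrt_zero] at hK
    exact not_tendsto_const_atTop 0 atTop hK
  have : Nonempty (Fin n) := nonempty_of_iInf_eigenvalues_mul_transpose_pos hCC hpos
  refine hK.atTop_of_mul_sq_le (a := 2 * specNorm A) (b := 2 * specNorm B * specNorm C)
    (mul_pos (mul_pos hSig.iInf_eigenvalues_pos hR.iInf_eigenvalues_pos) hpos)
    (by have := specNorm_nonneg A; positivity)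
    (by have := specNorm_nonneg B; have := specNorm_nonneg C; positivity)
    (fun j => (hX j).trace_mul_nonneg_s12 hSig.posSemidef) fun j => ?_
  linear_combination mul_frobNorm_sq_le_mul_trace_of_lyapunov A B C hSig.posSemidef hQ
    hR.posSemidef hCC (hX j) (hLyap j)

end LQR

theorem stmt_12_general {n m r : ℕ}
    (A : Matrix (Fin n) (Fin n) ℝ) (B : Matrix (Fin n) (Fin m) ℝ)
    (C : Matrix (Fin r) (Fin n) ℝ)
    (Sig Q : Matrix (Fin n) (Fin n) ℝ) (R : Matrix (Fin m) (Fin m) ℝ)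
    (hSig : Sig.PosDef) (hQ : Q.PosDef) (hR : R.PosDef)
    (hCC : (C * Cᵀ).IsHermitian) :
    (∀ (K : Matrix (Fin m) (Fin r) ℝ) (X : Matrix (Fin n) (Fin n) ℝ),
      IsHurwitz (A - B * K * C) → X.PosDef →
      (A - B * K * C)ᵀ * X + X * (A - B * K * C) + Cᵀ * Kᵀ * R * K * C + Q = 0 →
      (⨅ i, hSig.1.eigenvalues i) * (⨅ i, hR.1.eigenvalues i) * frobNorm K ^ 2 *
          (⨅ i, hCC.eigenvalues i) /
          (2 * specNorm A + 2 * frobNorm K * specNorm B * specNorm C)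
        ≤ (X * Sig).trace) ∧
    (0 < ⨅ i, hCC.eigenvalues i →
      ∀ (K : ℕ → Matrix (Fin m) (Fin r) ℝ) (X : ℕ → Matrix (Fin n) (Fin n) ℝ),
        (∀ j, IsHurwitz (A - B * K j * C)) → (∀ j, (X j).PosDef) →
        (∀ j, (A - B * K j * C)ᵀ * X j + X j * (A - B * K j * C)
            + Cᵀ * (K j)ᵀ * R * K j * C + Q = 0) →
        Filter.Tendsto (fun j => frobNorm (K j)) Filter.atTop Filter.atTop →
        Filter.Tendsto (fun j => (X j * Sig).trace) Filter.atTop Filter.atTop) :=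
  ⟨fun _ _ _ hX hLyap =>
    div_le_trace_of_lyapunov A B C hSig.posSemidef hQ.posSemidef hR.posSemidef hCC
      hX.posSemidef hLyap,
   fun hpos _ _ _ hX hLyap hK =>
    tendsto_trace_atTop_of_lyapunov A B C hSig hQ.posSemidef hR hCC hpos
      (fun j => (hX j).posSemidef) hLyap hK⟩

theorem stmt_12 {n m r : ℕ}
    (A : Matrix (Fin n) (Fin n) ℝ) (B : Matrix (Fin n) (Fin m) ℝ)
    (C : Matrix (Fin r) (Fin n) ℝ)
    (Sig Q : Matrix (Fin n) (Fin n) ℝ) (R : Matrix (Fin m) (Fin m) ℝ)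
    (hSig : Sig.PosDef) (hQ : Q.PosDef) (hR : R.PosDef)
    (hCC : (C * Cᵀ).IsHermitian)
    (hrank : C.rank = r) :
    (∀ (K : Matrix (Fin m) (Fin r) ℝ) (X : Matrix (Fin n) (Fin n) ℝ),
      IsHurwitz (A - B * K * C) → X.PosDef →
      (A - B * K * C)ᵀ * X + X * (A - B * K * C) + Cᵀ * Kᵀ * R * K * C + Q = 0 →
      (⨅ i, hSig.1.eigenvalues i) * (⨅ i, hR.1.eigenvalues i) * frobNorm K ^ 2 *
          (⨅ i, hCC.eigenvalues i) /
          (2 * specNorm A + 2 * frobNorm K * specNorm B * specNorm C)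
        ≤ (X * Sig).trace) ∧
    (0 < ⨅ i, hCC.eigenvalues i →
      ∀ (K : ℕ → Matrix (Fin m) (Fin r) ℝ) (X : ℕ → Matrix (Fin n) (Fin n) ℝ),
        (∀ j, IsHurwitz (A - B * K j * C)) → (∀ j, (X j).PosDef) →
        (∀ j, (A - B * K j * C)ᵀ * X j + X j * (A - B * K j * C)
            + Cᵀ * (K j)ᵀ * R * K j * C + Q = 0) →
        Filter.Tendsto (fun j => frobNorm (K j)) Filter.atTop Filter.atTop →
        Filter.Tendsto (fun j => (X j * Sig).trace) Filter.atTop Filter.atTop) :=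
  stmt_12_general A B C Sig Q R hSig hQ hR hCC
end

section
/- Let f : ℝⁿ → ℝ be twice continuously differentiable, μ-strongly convex, with L-Lipschitz gradient. For the damped Newton–step-size gradient method x_{j+1} = x_j − σγ_j ∇f(x_j), where γ_j = ‖∇f(x_j)‖² / ⟨∇²f(x_j)∇f(x_j), ∇f(x_j)⟩ and 0 < σ ≤ μ/L, one has f(x_{j+1}) − f(x*) ≤ (1 − μσ/L)(f(x_j) − f(x*)) for every j, where x* is the unique minimizer. -/
/-!
Restricting `f` to a line and integrating the Hessian bounds twice gives the quadratic bounds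
`f x + ⟪∇f x, v⟫ + μ‖v‖²/2 ≤ f (x + v) ≤ f x + ⟪∇f x, v⟫ + L‖v‖²/2`. Minimising the lower bound
over `v` gives the Polyak–Łojasiewicz inequality `f x - f y ≤ ‖∇f x‖² / (2μ)` for every `y`, and the
upper bound shows that a gradient step of length `s ≤ 1/L` decreases `f` by at least
`s‖∇f x‖²/2`. Since `μ‖g‖² ≤ ⟪∇²f g, g⟫ ≤ L‖g‖²`, the step `σγ_j` lies in `[σ/L, σ/μ] ⊆ [σ/L, 1/L]`,
so the decrease is at least `σ‖∇f‖²/(2L) ≥ (μσ/L)(f x_j - f x*)`.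
-/

open scoped RealInnerProductSpace

theorem image_one_le_of_second_deriv_le {φ p q : ℝ → ℝ} {c : ℝ}
    (hφ : ∀ t, HasDerivAt φ (p t) t) (hp : ∀ t, HasDerivAt p (q t) t) (hq : ∀ t, q t ≤ c) :
    φ 1 ≤ φ 0 + p 0 + c / 2 := by
  have hr : Antitone fun t => p t - c * t :=
    antitone_of_hasDerivAt_nonpos (f' := fun t => q t - c)
      (fun t => by simpa using (hp t).fun_sub ((hasDerivAt_id' t).const_mul c))
      fun t => sub_nonpos.2 (hq t)
  have hψ : ∀ t, HasDerivAt (fun s => φ s - p 0 * s - c * s ^ 2 / 2) (p t - p 0 - c * t) t := by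
    intro t
    refine (((hφ t).fun_sub ((hasDerivAt_id' t).const_mul (p 0))).fun_sub
      (((hasDerivAt_pow 2 t).const_mul c).div_const 2)).congr_deriv ?_
    norm_num
    ring
  have hanti : AntitoneOn (fun s => φ s - p 0 * s - c * s ^ 2 / 2) (Set.Ici 0) :=
    antitoneOn_of_hasDerivWithinAt_nonpos (convex_Ici 0)
      (HasDerivAt.continuousOn fun t _ => hψ t) (fun t _ => (hψ t).hasDerivWithinAt)
      fun t ht => by
        rw [interior_Ici] at ht
        have hrt := hr ht.le
        simp only [mul_zero, sub_zero] at hrt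
        linarith
  have h01 := hanti Set.self_mem_Ici (Set.mem_Ici.2 zero_le_one) zero_le_one
  simp only at h01
  linarith

theorem le_image_one_of_le_second_deriv {φ p q : ℝ → ℝ} {c : ℝ}
    (hφ : ∀ t, HasDerivAt φ (p t) t) (hp : ∀ t, HasDerivAt p (q t) t) (hq : ∀ t, c ≤ q t) :
    φ 0 + p 0 + c / 2 ≤ φ 1 := by
  have := image_one_le_of_second_deriv_le (fun t => (hφ t).fun_neg) (fun t => (hp t).fun_neg)
    (c := -c) fun t => neg_le_neg (hq t)
  linarith

theorem hasDerivAt_add_smul {E : Type*} [NormedAddCommGroup E] [NormedSpace ℝ E] (x v : E)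
    (t : ℝ) : HasDerivAt (fun s : ℝ => x + s • v) v t := by
  simpa using ((hasDerivAt_id t).smul_const v).const_add x

section

variable {E : Type*} [NormedAddCommGroup E] [InnerProductSpace ℝ E] [CompleteSpace E] {f : E → ℝ}

theorem ContDiff.differentiable_gradient (hf : ContDiff ℝ 2 f) : Differentiable ℝ (gradient f) :=
  (InnerProductSpace.toDual ℝ E).symm.toContinuousLinearEquiv.differentiable.comp
    ((hf.fderiv_right (m := 1) (by norm_num)).differentiable one_ne_zero)

theorem hasDerivAt_apply_add_smul (hf : Differentiable ℝ f) (x v : E) (t : ℝ) :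
    HasDerivAt (fun s : ℝ => f (x + s • v)) ⟪gradient f (x + t • v), v⟫ t := by
  rw [inner_gradient_left]
  exact (hf _).hasFDerivAt.comp_hasDerivAt t (hasDerivAt_add_smul x v t)

theorem hasDerivAt_inner_gradient_add_smul (hf : ContDiff ℝ 2 f) (x v : E) (t : ℝ) :
    HasDerivAt (fun s : ℝ => ⟪gradient f (x + s • v), v⟫)
      ⟪fderiv ℝ (gradient f) (x + t • v) v, v⟫ t := by
  simpa using ((hf.differentiable_gradient _).hasFDerivAt.comp_hasDerivAt t
    (hasDerivAt_add_smul x v t)).inner ℝ (hasDerivAt_const t v)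

theorem apply_add_le_of_hessian_le (hf : ContDiff ℝ 2 f) {c : ℝ} (x v : E)
    (hc : ∀ y, ⟪fderiv ℝ (gradient f) y v, v⟫ ≤ c) :
    f (x + v) ≤ f x + ⟪gradient f x, v⟫ + c / 2 := by
  simpa using image_one_le_of_second_deriv_le
    (hasDerivAt_apply_add_smul (hf.differentiable two_ne_zero) x v)
    (hasDerivAt_inner_gradient_add_smul hf x v) fun _ => hc _

theorem le_apply_add_of_le_hessian (hf : ContDiff ℝ 2 f) {c : ℝ} (x v : E)
    (hc : ∀ y, c ≤ ⟪fderiv ℝ (gradient f) y v, v⟫) :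
    f x + ⟪gradient f x, v⟫ + c / 2 ≤ f (x + v) := by
  simpa using le_image_one_of_le_second_deriv
    (hasDerivAt_apply_add_smul (hf.differentiable two_ne_zero) x v)
    (hasDerivAt_inner_gradient_add_smul hf x v) fun _ => hc _

theorem sub_le_sq_norm_gradient_div (hf : ContDiff ℝ 2 f) {μ : ℝ} (hμ : 0 < μ)
    (hstrong : ∀ x v, μ * ‖v‖ ^ 2 ≤ ⟪fderiv ℝ (gradient f) x v, v⟫) (x y : E) :
    f x - f y ≤ ‖gradient f x‖ ^ 2 / (2 * μ) := by
  have hlow := le_apply_add_of_le_hessian hf x (y - x) (hstrong · (y - x))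
  rw [add_sub_cancel] at hlow
  have hcs := neg_le_of_abs_le (abs_real_inner_le_norm (gradient f x) (y - x))
  rw [le_div_iff₀ (by positivity)]
  nlinarith [sq_nonneg (‖gradient f x‖ - μ * ‖y - x‖)]

theorem apply_sub_smul_gradient_le (hf : ContDiff ℝ 2 f) {L : ℝ}
    (hsmooth : ∀ x v, ⟪fderiv ℝ (gradient f) x v, v⟫ ≤ L * ‖v‖ ^ 2) {s : ℝ} (hs : 0 ≤ s)
    (hsL : L * s ≤ 1) (x : E) :
    f (x - s • gradient f x) ≤ f x - s * ‖gradient f x‖ ^ 2 / 2 := by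
  have hup := apply_add_le_of_hessian_le hf x (-(s • gradient f x)) (hsmooth · _)
  rw [← sub_eq_add_neg, inner_neg_right, inner_smul_right, real_inner_self_eq_norm_sq, norm_neg,
    norm_smul, mul_pow, Real.norm_eq_abs, sq_abs] at hup
  nlinarith [mul_nonneg (mul_nonneg hs (sq_nonneg ‖gradient f x‖)) (sub_nonneg.2 hsL)]

end

/-- When `G = 0` the step size `σ * (G / δ)` is the junk value `0`, which is why the last bound
is stated after multiplication by `G`. -/
theorem step_size_bounds {μ L σ G δ : ℝ} (hμ : 0 < μ) (hσ : 0 < σ) (hσμL : σ ≤ μ / L)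
    (hG : 0 ≤ G) (hδμ : μ * G ≤ δ) (hδL : δ ≤ L * G) :
    0 ≤ σ * (G / δ) ∧ L * (σ * (G / δ)) ≤ 1 ∧ σ / L * G ≤ σ * (G / δ) * G := by
  have hL : 0 < L := (div_pos_iff_of_pos_left hμ).1 (hσ.trans_le hσμL)
  rcases hG.eq_or_lt with rfl | hG
  · simp
  have hδ : 0 < δ := (mul_pos hμ hG).trans_le hδμ
  refine ⟨by positivity, ?_, ?_⟩
  · calc L * (σ * (G / δ)) ≤ L * (μ / L * (G / (μ * G))) := by gcongr
      _ = 1 := by field_simp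
  · calc σ / L * G = σ * (G / (L * G)) * G := by field_simp
      _ ≤ σ * (G / δ) * G := by gcongr

theorem stmt_18_general {n : ℕ} (f : EuclideanSpace ℝ (Fin n) → ℝ) (μ L σ : ℝ)
    (hμ : 0 < μ)
    (hσ : 0 < σ) (hσμL : σ ≤ μ / L)
    (hf : ContDiff ℝ 2 f)
    (hstrong : ∀ x v, μ * ‖v‖ ^ 2 ≤ ⟪fderiv ℝ (fun y => gradient f y) x v, v⟫)
    (hsmooth : ∀ x v, ⟪fderiv ℝ (fun y => gradient f y) x v, v⟫ ≤ L * ‖v‖ ^ 2)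
    (xstar : EuclideanSpace ℝ (Fin n))
    (x : ℕ → EuclideanSpace ℝ (Fin n))
    (hx : ∀ j, x (j + 1) = x j -
      (σ * (‖gradient f (x j)‖ ^ 2 /
        ⟪fderiv ℝ (fun y => gradient f y) (x j) (gradient f (x j)), gradient f (x j)⟫))
        • gradient f (x j)) :
    ∀ j, f (x (j + 1)) - f xstar ≤ (1 - μ * σ / L) * (f (x j) - f xstar) := by
  intro j
  have hL : 0 < L := (div_pos_iff_of_pos_left hμ).1 (hσ.trans_le hσμL)
  obtain ⟨hs, hsL, hsσ⟩ := step_size_bounds hμ hσ hσμL (sq_nonneg ‖gradient f (x j)‖)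
    (hstrong (x j) _) (hsmooth (x j) _)
  have hdescent := apply_sub_smul_gradient_le hf hsmooth hs hsL (x j)
  have hPL := sub_le_sq_norm_gradient_div hf hμ hstrong (x j) xstar
  rw [← hx j] at hdescent
  have hrate : μ * σ / L * (f (x j) - f xstar) ≤ σ / L * ‖gradient f (x j)‖ ^ 2 / 2 := by
    calc μ * σ / L * (f (x j) - f xstar)
        ≤ μ * σ / L * (‖gradient f (x j)‖ ^ 2 / (2 * μ)) := by gcongr
      _ = σ / L * ‖gradient f (x j)‖ ^ 2 / 2 := by field_simp
  linarith

theorem stmt_18 {n : ℕ} (f : EuclideanSpace ℝ (Fin n) → ℝ) (μ L σ : ℝ)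
    (hμ : 0 < μ) (hμL : μ ≤ L)
    (hσ : 0 < σ) (hσμL : σ ≤ μ / L)
    (hf : ContDiff ℝ 2 f)
    (hstrong : ∀ x v, μ * ‖v‖ ^ 2 ≤ ⟪fderiv ℝ (fun y => gradient f y) x v, v⟫)
    (hsmooth : ∀ x v, ⟪fderiv ℝ (fun y => gradient f y) x v, v⟫ ≤ L * ‖v‖ ^ 2)
    (xstar : EuclideanSpace ℝ (Fin n)) (hmin : ∀ y, f xstar ≤ f y)
    (x : ℕ → EuclideanSpace ℝ (Fin n))
    (hx : ∀ j, x (j + 1) = x j -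
      (σ * (‖gradient f (x j)‖ ^ 2 /
        ⟪fderiv ℝ (fun y => gradient f y) (x j) (gradient f (x j)), gradient f (x j)⟫))
        • gradient f (x j)) :
    ∀ j, f (x (j + 1)) - f xstar ≤ (1 - μ * σ / L) * (f (x j) - f xstar) :=
  stmt_18_general f μ L σ hμ hσ hσμL hf hstrong hsmooth xstar x hx
end
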